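/- Let f(ω) = Σ_{j=1}^n a_j e^{i y_j ω} with a_j ∈ ℂ, y_j ∈ ℝ, and let μ ∈ ℝ, λ > 0, Ω > 0. Define the model error E_mod(ω) = [(f·(χ_{[-Ω,Ω]} - 1)·e^{-iμ·}) ∗ G_λ](ω), where G_λ(ω) = √(λ/π)e^{-λω²}. Then for every 0 < ε < 1 and every ω ∈ [(-1+ε)Ω, (1-ε)Ω], |E_mod(ω)| ≤ (Σ_j |a_j|)/√π · [Φ(-√λ·εΩ) + Φ(√λ(-2Ω + εΩ))], where Φ(x) = ∫_{-∞}^x e^{-t²} dt. -/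

import Mathlib

/-!
The truncation factor `χ - 1` vanishes on `[-Ω, Ω]` and `|f| ≤ Σ |a_j|`, so `|E_mod(ω)|` is at most
`Σ |a_j|` times the mass of the Gaussian `G_λ(ω - ·)` outside `[-Ω, Ω]`. The substitution
`t = √λ (η - ω)` turns that mass into `(Φ(-√λ(Ω + ω)) + Φ(-√λ(Ω - ω))) / √π`. The two arguments have
the fixed sum `-2√λΩ` and both lie below `-√λεΩ`; as `e^{-t²}` increases on `(-∞, 0]`, `Φ` is convex
there, so the sum of its values can only grow when the arguments are pushed apart to `-√λεΩ` and
`√λ(-2Ω + εΩ)`.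
-/

open MeasureTheory Real Complex

open Set

lemma norm_sum_mul_exp_I_mul_le {ι : Type*} [Fintype ι] (a : ι → ℂ) (y : ι → ℝ) (ω : ℝ) :
    ‖∑ j, a j * Complex.exp (Complex.I * y j * ω)‖ ≤ ∑ j, ‖a j‖ := by
  refine (norm_sum_le _ _).trans (Finset.sum_le_sum fun j _ => ?_)
  have : Complex.I * y j * ω = ((y j * ω : ℝ) : ℂ) * Complex.I := by push_cast; ring
  rw [norm_mul, this, norm_exp_ofReal_mul_I, mul_one]

lemma setIntegral_compl_Icc {E : Type*} [NormedAddCommGroup E] [NormedSpace ℝ E] {g : ℝ → E}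
    (hg : Integrable g) {a b : ℝ} (hab : a ≤ b) :
    ∫ x in (Icc a b)ᶜ, g x = (∫ x in Iic a, g x) + ∫ x in Ioi b, g x := by
  have hcompl : (Icc a b)ᶜ = Iio a ∪ Ioi b := by
    ext x; simp only [mem_compl_iff, mem_Icc, not_and_or, not_le, mem_union, mem_Iio, mem_Ioi]
  have hdisj : Disjoint (Iio a) (Ioi b) :=
    disjoint_left.2 fun x hxa hxb => (lt_irrefl x) ((mem_Iio.1 hxa).trans_le hab |>.trans hxb)
  rw [hcompl, setIntegral_union hdisj measurableSet_Ioi hg.integrableOn hg.integrableOn,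
    ← integral_Iic_eq_integral_Iio]

lemma setIntegral_Iic_comp_mul_add {E : Type*} [NormedAddCommGroup E] [NormedSpace ℝ E]
    (g : ℝ → E) {s : ℝ} (hs : 0 < s) (b c : ℝ) :
    ∫ x in Iic b, g (s * x + c) = s⁻¹ • ∫ t in Iic (s * b + c), g t := by
  have hind : (Iic b).indicator (fun x => g (s * x + c))
      = fun x => (Iic (s * b + c)).indicator g (s * x + c) := by
    ext x
    simp only [indicator, mem_Iic, add_le_add_iff_right, mul_le_mul_iff_right₀ hs]
  rw [← integral_indicator measurableSet_Iic, hind,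
    Measure.integral_comp_mul_left (fun x => (Iic (s * b + c)).indicator g (x + c)),
    integral_add_right_eq_self, integral_indicator measurableSet_Iic, abs_of_pos (inv_pos.2 hs)]

lemma setIntegral_Iic_exp_neg_mul_sq_sub {lam : ℝ} (hlam : 0 < lam) (ω b : ℝ) :
    ∫ x in Iic b, Real.exp (-lam * (ω - x) ^ 2)
      = (√lam)⁻¹ * ∫ t in Iic (√lam * (b - ω)), Real.exp (-t ^ 2) := by
  have hsq : ∀ x, -lam * (ω - x) ^ 2 = -(√lam * x + -(√lam * ω)) ^ 2 := fun x => by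
    nth_rw 1 [← sq_sqrt hlam.le]; ring
  simp_rw [hsq]
  rw [setIntegral_Iic_comp_mul_add (fun t => Real.exp (-t ^ 2)) (sqrt_pos.2 hlam), smul_eq_mul]
  ring_nf

lemma setIntegral_Ioi_exp_neg_mul_sq_sub {lam : ℝ} (hlam : 0 < lam) (ω b : ℝ) :
    ∫ x in Ioi b, Real.exp (-lam * (ω - x) ^ 2)
      = (√lam)⁻¹ * ∫ t in Iic (√lam * (ω - b)), Real.exp (-t ^ 2) := by
  have hsq : ∀ x, (ω - -x) ^ 2 = (-ω - x) ^ 2 := fun x => by ring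
  rw [← neg_neg b, ← integral_comp_neg_Iic, neg_neg]
  simp_rw [hsq]
  rw [setIntegral_Iic_exp_neg_mul_sq_sub hlam (-ω) (-b)]
  ring_nf

lemma setIntegral_compl_Icc_exp_neg_mul_sq_sub {lam : ℝ} (hlam : 0 < lam) {Ω : ℝ} (hΩ : 0 ≤ Ω)
    (ω : ℝ) :
    ∫ x in (Icc (-Ω) Ω)ᶜ, Real.exp (-lam * (ω - x) ^ 2)
      = (√lam)⁻¹ * ((∫ t in Iic (√lam * (-Ω - ω)), Real.exp (-t ^ 2))
          + ∫ t in Iic (√lam * (ω - Ω)), Real.exp (-t ^ 2)) := by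
  rw [setIntegral_compl_Icc ((integrable_exp_neg_mul_sq hlam).comp_sub_left ω) (by linarith),
    setIntegral_Iic_exp_neg_mul_sq_sub hlam, setIntegral_Ioi_exp_neg_mul_sq_sub hlam, mul_add]

lemma monotoneOn_exp_neg_sq : MonotoneOn (fun t : ℝ => Real.exp (-t ^ 2)) (Iic 0) :=
  fun s hs t ht hst => Real.exp_le_exp.2 (by nlinarith [mem_Iic.1 hs, mem_Iic.1 ht])

lemma setIntegral_Iic_add_le_of_monotoneOn {g : ℝ → ℝ} (hg : Integrable g)
    (hmono : MonotoneOn g (Iic 0)) {p q P Q : ℝ} (hp : p ≤ 0) (hPp : P ≤ p) (hQp : Q ≤ p)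
    (hsum : P + Q = p + q) :
    (∫ t in Iic P, g t) + ∫ t in Iic Q, g t ≤ (∫ t in Iic p, g t) + ∫ t in Iic q, g t := by
  have hP : (∫ t in Iic p, g t) - ∫ t in Iic P, g t = ∫ t in P..p, g t :=
    intervalIntegral.integral_Iic_sub_Iic hg.integrableOn hg.integrableOn
  have hQ : (∫ t in Iic Q, g t) - ∫ t in Iic q, g t = ∫ t in q..Q, g t :=
    intervalIntegral.integral_Iic_sub_Iic hg.integrableOn hg.integrableOn
  -- `[q, Q]` is `[P, p]` translated to the left, where `g` is smaller
  have hshift : ∫ t in q..Q, g t = ∫ t in P..p, g (t - (p - Q)) := by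
    rw [intervalIntegral.integral_comp_sub_right]; congr 1 <;> linarith
  have hle : ∫ t in P..p, g (t - (p - Q)) ≤ ∫ t in P..p, g t :=
    intervalIntegral.integral_mono_on hPp (hg.comp_sub_right _).intervalIntegrable
      hg.intervalIntegrable fun t ht =>
        hmono (mem_Iic.2 (by linarith [ht.2])) (mem_Iic.2 (by linarith [ht.2])) (by linarith)
  linarith

lemma norm_truncated_integrand_le {z : ℂ} {M : ℝ} (hz : ‖z‖ ≤ M) (s : Set ℝ) (μ : ℝ)
    {k : ℝ → ℝ} (x : ℝ) [Decidable (x ∈ s)] (hk : 0 ≤ k x) :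
    ‖(z * ((if x ∈ s then (1 : ℂ) else 0) - 1) * Complex.exp (-Complex.I * μ * x)) * (k x : ℂ)‖
      ≤ sᶜ.indicator (fun x => M * k x) x := by
  by_cases hx : x ∈ s
  · simp [hx]
  · have hphase : -Complex.I * μ * x = ((-(μ * x) : ℝ) : ℂ) * Complex.I := by push_cast; ring
    rw [indicator_of_mem (mem_compl hx), if_neg hx, hphase, norm_mul, norm_mul, norm_mul,
      norm_exp_ofReal_mul_I, norm_real, norm_of_nonneg hk, zero_sub, norm_neg, norm_one,
      mul_one, mul_one]
    exact mul_le_mul_of_nonneg_right hz hk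

theorem model_error_bound_general (n : ℕ) (a : Fin n → ℂ) (y : Fin n → ℝ) (μ Ω lam : ℝ)
    (hΩ : 0 < Ω) (hlam : 0 < lam)
    (f : ℝ → ℂ) (hf : ∀ ω, f ω = ∑ j, a j * Complex.exp (Complex.I * y j * ω))
    (Φ : ℝ → ℝ) (hΦ : ∀ x, Φ x = ∫ t in Set.Iic x, Real.exp (-t ^ 2))
    (Emod : ℝ → ℂ)
    (hE : ∀ ω, Emod ω = ∫ η : ℝ,
        (f η * ((if η ∈ Set.Icc (-Ω) Ω then (1 : ℂ) else 0) - 1) *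
          Complex.exp (-Complex.I * μ * η)) *
        (Real.sqrt (lam / Real.pi) * Real.exp (-lam * (ω - η) ^ 2) : ℝ))
    (ε : ℝ) (hε : 0 < ε)
    (ω : ℝ) (hω : ω ∈ Set.Icc ((-1 + ε) * Ω) ((1 - ε) * Ω)) :
    ‖Emod ω‖ ≤ (∑ j, ‖a j‖) / Real.sqrt Real.pi *
      (Φ (-(Real.sqrt lam) * ε * Ω) + Φ (Real.sqrt lam * (-2 * Ω + ε * Ω))) := by
  have hkernel : Integrable fun η => √(lam / π) * Real.exp (-lam * (ω - η) ^ 2) :=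
    ((integrable_exp_neg_mul_sq hlam).comp_sub_left ω).const_mul _
  have hgauss : Integrable fun t : ℝ => Real.exp (-t ^ 2) := by
    simpa using integrable_exp_neg_mul_sq one_pos
  have hrearr := setIntegral_Iic_add_le_of_monotoneOn hgauss monotoneOn_exp_neg_sq
    (p := -√lam * ε * Ω) (q := √lam * (-2 * Ω + ε * Ω)) (P := √lam * (-Ω - ω))
    (Q := √lam * (ω - Ω)) (by nlinarith [mul_pos (sqrt_pos.2 hlam) (mul_pos hε hΩ)])
    (by nlinarith [hω.1, sqrt_nonneg lam]) (by nlinarith [hω.2, sqrt_nonneg lam]) (by ring)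
  have hconst : √(lam / π) * (√lam)⁻¹ = 1 / √π := by
    rw [sqrt_div hlam.le]; field_simp
  calc ‖Emod ω‖ ≤ ∫ η, (Icc (-Ω) Ω)ᶜ.indicator
        (fun η => (∑ j, ‖a j‖) * (√(lam / π) * Real.exp (-lam * (ω - η) ^ 2))) η := by
        rw [hE]
        refine norm_integral_le_of_norm_le ((hkernel.const_mul _).indicator
          measurableSet_Icc.compl) (ae_of_all _ fun η => ?_)
        exact norm_truncated_integrand_le ((hf η).symm ▸ norm_sum_mul_exp_I_mul_le a y η) _ μ
          (k := fun η => √(lam / π) * Real.exp (-lam * (ω - η) ^ 2)) η (by positivity)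
    _ = (∑ j, ‖a j‖) * (√(lam / π) * (√lam)⁻¹) * (Φ (√lam * (-Ω - ω)) + Φ (√lam * (ω - Ω))) := by
        rw [integral_indicator measurableSet_Icc.compl, integral_const_mul, integral_const_mul,
          setIntegral_compl_Icc_exp_neg_mul_sq_sub hlam hΩ.le, hΦ, hΦ]
        ring
    _ ≤ (∑ j, ‖a j‖) / √π * (Φ (-√lam * ε * Ω) + Φ (√lam * (-2 * Ω + ε * Ω))) := by
        rw [hconst, mul_one_div]
        exact mul_le_mul_of_nonneg_left (by simpa only [hΦ] using hrearr) (by positivity)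

/-- Model error bound for centralization and Gaussian windowing. -/
theorem model_error_bound (n : ℕ) (a : Fin n → ℂ) (y : Fin n → ℝ) (μ Ω lam : ℝ)
    (hΩ : 0 < Ω) (hlam : 0 < lam)
    (f : ℝ → ℂ) (hf : ∀ ω, f ω = ∑ j, a j * Complex.exp (Complex.I * y j * ω))
    (Φ : ℝ → ℝ) (hΦ : ∀ x, Φ x = ∫ t in Set.Iic x, Real.exp (-t ^ 2))
    (Emod : ℝ → ℂ)
    (hE : ∀ ω, Emod ω = ∫ η : ℝ,
        (f η * ((if η ∈ Set.Icc (-Ω) Ω then (1 : ℂ) else 0) - 1) *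
          Complex.exp (-Complex.I * μ * η)) *
        (Real.sqrt (lam / Real.pi) * Real.exp (-lam * (ω - η) ^ 2) : ℝ))
    (ε : ℝ) (hε : 0 < ε) (hε1 : ε < 1)
    (ω : ℝ) (hω : ω ∈ Set.Icc ((-1 + ε) * Ω) ((1 - ε) * Ω)) :
    ‖Emod ω‖ ≤ (∑ j, ‖a j‖) / Real.sqrt Real.pi *
      (Φ (-(Real.sqrt lam) * ε * Ω) + Φ (Real.sqrt lam * (-2 * Ω + ε * Ω))) :=
  model_error_bound_general n a y μ Ω lam hΩ hlam f hf Φ hΦ Emod hE ε hε ω hω
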